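/- Let |q|<1 with q≠0, and let n≥0, A even, 1≤r≤A/2. Define ρ_k(q) = q^k R_n(q^k;q), the summand of S_n(q). Then ρ_k(q)=0 for 1≤k≤rn and ρ_k(q)≠0 for k≥rn+1, and for k≥rn+1 the ratio satisfies ρ_{k+1}(q)/ρ_k(q) = q^{(A-2r)n/2+1} · (1-q^{1+k+n+rn})/(1-q^{k-rn}) · ((1-q^k)/(1-q^{k+n+1}))^{A+1}. -/

import Mathlib

/-- The function `R_n(T;q)` of the paper, for complex `q ≠ 0` (the fractional
power of `q` being a complex power). -/
noncomputable def Rc (A r n : ℕ) (q T : ℂ) : ℂ :=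
  (∏ i ∈ Finset.range n, (1 - q ^ (i + 1))) ^ (A - 2 * r) *
    q ^ (-(((A : ℂ) - 2 * r) * (n : ℂ) / 4)) *
    ((∏ i ∈ Finset.range (r * n), (1 - q ^ ((i : ℤ) - (r * n : ℤ)) * T)) *
      ∏ i ∈ Finset.range (r * n), (1 - q ^ (n + 1 + i) * T)) /
    (∏ i ∈ Finset.range (n + 1), (1 - q ^ i * T)) ^ A *
    T ^ ((A - 2 * r) * n / 2)

lemma one_sub_pow_ne (q : ℂ) (hq1 : ‖q‖ < 1) {m : ℕ} (hm : 1 ≤ m) :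
    (1 : ℂ) - q ^ m ≠ 0 := by
  intro h
  have h1 : q ^ m = 1 := by linear_combination -h
  have : ‖q ^ m‖ < 1 := by
    rw [norm_pow]
    exact pow_lt_one₀ (norm_nonneg q) hq1 (by omega)
  rw [h1] at this
  simp at this

lemma Rc_eq (q : ℂ) (hq0 : q ≠ 0) (A r n k : ℕ) (hk : r * n ≤ k) :
    Rc A r n q (q ^ k) =
    (∏ i ∈ Finset.range n, (1 - q ^ (i + 1))) ^ (A - 2 * r) *
      q ^ (-(((A : ℂ) - 2 * r) * (n : ℂ) / 4)) *
      ((∏ i ∈ Finset.range (r * n), (1 - q ^ (k - r * n + i))) *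
        ∏ i ∈ Finset.range (r * n), (1 - q ^ (n + 1 + i + k))) /
      (∏ i ∈ Finset.range (n + 1), (1 - q ^ (i + k))) ^ A *
      q ^ (k * ((A - 2 * r) * n / 2)) := by
  have h1 : ∀ i ∈ Finset.range (r * n),
      (1 - q ^ ((i : ℤ) - (r * n : ℤ)) * q ^ k) = 1 - q ^ (k - r * n + i) := by
    intro i hi
    have : q ^ ((i : ℤ) - (r * n : ℤ)) * q ^ k = q ^ (k - r * n + i) := by
      rw [← zpow_natCast q k, ← zpow_add₀ hq0, ← zpow_natCast q (k - r * n + i)]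
      congr 1
      omega
    rw [this]
  have h2 : ∀ i ∈ Finset.range (r * n),
      (1 - q ^ (n + 1 + i) * q ^ k) = 1 - q ^ (n + 1 + i + k) := by
    intro i hi; rw [← pow_add]
  have h3 : ∀ i ∈ Finset.range (n + 1),
      (1 - q ^ i * q ^ k) = 1 - q ^ (i + k) := by
    intro i hi; rw [← pow_add]
  rw [Rc, Finset.prod_congr rfl h1, Finset.prod_congr rfl h2, Finset.prod_congr rfl h3,
    ← pow_mul]

lemma rho_ne (q : ℂ) (hq0 : q ≠ 0) (hq1 : ‖q‖ < 1)
    (A r n k : ℕ) (hk : r * n + 1 ≤ k) : q ^ k * Rc A r n q (q ^ k) ≠ 0 := by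
  rw [Rc_eq q hq0 A r n k (by omega)]
  apply mul_ne_zero (pow_ne_zero _ hq0)
  apply mul_ne_zero
  apply div_ne_zero
  · apply mul_ne_zero
    apply mul_ne_zero
    · exact pow_ne_zero _ (Finset.prod_ne_zero_iff.2 fun i _ =>
        one_sub_pow_ne q hq1 (by omega))
    · rw [Ne, Complex.cpow_eq_zero_iff]
      tauto
    · apply mul_ne_zero <;>
        exact Finset.prod_ne_zero_iff.2 fun i _ => one_sub_pow_ne q hq1 (by omega)
  · exact pow_ne_zero _ (Finset.prod_ne_zero_iff.2 fun i _ =>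
      one_sub_pow_ne q hq1 (by omega))
  · exact pow_ne_zero _ hq0

lemma prod_shift (f : ℕ → ℂ) (m : ℕ) :
    (∏ i ∈ Finset.range m, f (i + 1)) * f 0 = (∏ i ∈ Finset.range m, f i) * f m := by
  rw [← Finset.prod_range_succ', Finset.prod_range_succ]

/-- Properties of the summand `ρ_k(q) = q^k R_n(q^k;q)` of `S_n(q)`: it vanishes for
`1 ≤ k ≤ rn`, is nonzero for `k ≥ rn+1`, and for `k ≥ rn+1` the ratio
`ρ_{k+1}/ρ_k` has the stated product form. -/
theorem rho_properties (q : ℂ) (hq0 : q ≠ 0) (hq1 : ‖q‖ < 1)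
    (A r n : ℕ) (hA : Even A) (hr : 1 ≤ r) (hr2 : 2 * r ≤ A) :
    (∀ k : ℕ, 1 ≤ k → k ≤ r * n → q ^ k * Rc A r n q (q ^ k) = 0) ∧
    (∀ k : ℕ, r * n + 1 ≤ k → q ^ k * Rc A r n q (q ^ k) ≠ 0) ∧
    (∀ k : ℕ, r * n + 1 ≤ k →
      (q ^ (k + 1) * Rc A r n q (q ^ (k + 1))) / (q ^ k * Rc A r n q (q ^ k)) =
        q ^ ((A - 2 * r) * n / 2 + 1) *
          ((1 - q ^ (1 + k + n + r * n)) / (1 - q ^ (k - r * n))) *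
          ((1 - q ^ k) / (1 - q ^ (k + n + 1))) ^ (A + 1)) := by
  refine ⟨?_, fun k hk => rho_ne q hq0 hq1 A r n k hk, ?_⟩
  · -- vanishing
    intro k hk1 hk2
    have hzero : (∏ i ∈ Finset.range (r * n),
        (1 - q ^ ((i : ℤ) - (r * n : ℤ)) * q ^ k)) = 0 := by
      apply Finset.prod_eq_zero (i := r * n - k) (Finset.mem_range.2 (by omega))
      have : q ^ (((r * n - k : ℕ) : ℤ) - (r * n : ℤ)) * q ^ k = 1 := by
        rw [← zpow_natCast q k, ← zpow_add₀ hq0]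
        have h : ((r * n - k : ℕ) : ℤ) - (r * n : ℤ) + (k : ℤ) = 0 := by omega
        rw [h, zpow_zero]
      rw [this, sub_self]
    rw [Rc, hzero]
    simp
  · -- ratio
    intro k hk
    have hk' : r * n ≤ k := by omega
    have hk1' : r * n ≤ k + 1 := by omega
    have ha : (1 : ℂ) - q ^ k ≠ 0 := one_sub_pow_ne q hq1 (by omega)
    have hb : (1 : ℂ) - q ^ (k + n + 1) ≠ 0 := one_sub_pow_ne q hq1 (by omega)
    have hc : (1 : ℂ) - q ^ (k - r * n) ≠ 0 := one_sub_pow_ne q hq1 (by omega)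
    have hd : (1 : ℂ) - q ^ (1 + k + n + r * n) ≠ 0 := one_sub_pow_ne q hq1 (by omega)
    have hP1 : (∏ i ∈ Finset.range (r * n), (1 - q ^ (k + 1 - r * n + i))) * (1 - q ^ (k - r * n))
        = (∏ i ∈ Finset.range (r * n), (1 - q ^ (k - r * n + i))) * (1 - q ^ k) := by
      have base := prod_shift (fun i => 1 - q ^ (k - r * n + i)) (r * n)
      simp only [add_zero] at base
      rw [show k - r * n + r * n = k from by omega] at base
      rw [Finset.prod_congr rfl (fun i _ => show (1 - q ^ (k + 1 - r * n + i) : ℂ)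
        = 1 - q ^ (k - r * n + (i + 1)) from by
          rw [show k + 1 - r * n + i = k - r * n + (i + 1) from by omega])]
      exact base
    have hP2 : (∏ i ∈ Finset.range (r * n), (1 - q ^ (n + 1 + i + (k + 1)))) * (1 - q ^ (k + n + 1))
        = (∏ i ∈ Finset.range (r * n), (1 - q ^ (n + 1 + i + k))) * (1 - q ^ (1 + k + n + r * n)) := by
      have base := prod_shift (fun i => 1 - q ^ (n + 1 + i + k)) (r * n)
      simp only [add_zero] at base
      rw [show n + 1 + r * n + k = 1 + k + n + r * n from by omega,
        show n + 1 + 0 + k = k + n + 1 from by omega] at base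
      rw [Finset.prod_congr rfl (fun i _ => show (1 - q ^ (n + 1 + i + (k + 1)) : ℂ)
        = 1 - q ^ (n + 1 + (i + 1) + k) from by
          rw [show n + 1 + i + (k + 1) = n + 1 + (i + 1) + k from by omega])]
      exact base
    have hD : (∏ i ∈ Finset.range (n + 1), (1 - q ^ (i + (k + 1)))) * (1 - q ^ k)
        = (∏ i ∈ Finset.range (n + 1), (1 - q ^ (i + k))) * (1 - q ^ (k + n + 1)) := by
      have base := prod_shift (fun i => 1 - q ^ (i + k)) (n + 1)
      beta_reduce at base
      rw [show 0 + k = k from by omega,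
        show n + 1 + k = k + n + 1 from by omega] at base
      rw [Finset.prod_congr rfl (fun i _ => show (1 - q ^ (i + (k + 1)) : ℂ)
        = 1 - q ^ (i + 1 + k) from by
          rw [show i + (k + 1) = i + 1 + k from by omega])]
      exact base
    have e1 : (∏ i ∈ Finset.range (r * n), (1 - q ^ (k + 1 - r * n + i)))
        = (∏ i ∈ Finset.range (r * n), (1 - q ^ (k - r * n + i))) * (1 - q ^ k) / (1 - q ^ (k - r * n)) := by
      rw [eq_div_iff hc]; exact hP1
    have e2 : (∏ i ∈ Finset.range (r * n), (1 - q ^ (n + 1 + i + (k + 1))))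
        = (∏ i ∈ Finset.range (r * n), (1 - q ^ (n + 1 + i + k))) * (1 - q ^ (1 + k + n + r * n)) / (1 - q ^ (k + n + 1)) := by
      rw [eq_div_iff hb]; exact hP2
    have e3 : (∏ i ∈ Finset.range (n + 1), (1 - q ^ (i + (k + 1))))
        = (∏ i ∈ Finset.range (n + 1), (1 - q ^ (i + k))) * (1 - q ^ (k + n + 1)) / (1 - q ^ k) := by
      rw [eq_div_iff ha]; exact hD
    have hDne : (∏ i ∈ Finset.range (n + 1), (1 - q ^ (i + k))) ≠ 0 :=
      Finset.prod_ne_zero_iff.2 fun i _ => one_sub_pow_ne q hq1 (by omega)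
    have hCne : (q : ℂ) ^ (-(((A : ℂ) - 2 * r) * (n : ℂ) / 4)) ≠ 0 := by
      rw [Ne, Complex.cpow_eq_zero_iff]; tauto
    have hQne : (∏ i ∈ Finset.range n, (1 - q ^ (i + 1))) ≠ 0 :=
      Finset.prod_ne_zero_iff.2 fun i _ => one_sub_pow_ne q hq1 (by omega)
    rw [div_eq_iff (rho_ne q hq0 hq1 A r n k hk),
      Rc_eq q hq0 A r n (k + 1) hk1', Rc_eq q hq0 A r n k hk', e1, e2, e3]
    set Q := ∏ i ∈ Finset.range n, (1 - q ^ (i + 1)) with hQ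
    set C := q ^ (-(((A : ℂ) - 2 * r) * (n : ℂ) / 4)) with hC
    set P1 := ∏ i ∈ Finset.range (r * n), (1 - q ^ (k - r * n + i)) with hP1'
    set P2 := ∏ i ∈ Finset.range (r * n), (1 - q ^ (n + 1 + i + k)) with hP2'
    set D := ∏ i ∈ Finset.range (n + 1), (1 - q ^ (i + k)) with hD'
    set a := (1 : ℂ) - q ^ k with ha'
    set b := (1 : ℂ) - q ^ (k + n + 1) with hb'
    set c := (1 : ℂ) - q ^ (k - r * n) with hc'
    set d := (1 : ℂ) - q ^ (1 + k + n + r * n) with hd'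
    clear_value Q C P1 P2 D a b c d
    field_simp
    rw [div_pow, div_pow]
    field_simp
    ring
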